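/- arXiv:2312.12558 — 3 statements merged into one kernel-verified Lean document; each statement's English description precedes it below -/
import Mathlib

section
/- For the learning rate sequence α_t = (H+1)/(H+t) with H ≥ 1 and weights α_t^i := α_i ∏_{j=i+1}^t (1-α_j), for every t ≥ 1 and every a ∈ [1/2, 1], the weighted sum satisfies 1/t^a ≤ ∑_{i=1}^t α_t^i / i^a ≤ (1 + 1/H)/t^a. -/
/-- Learning rate `α_t = (H+1)/(H+t)`. -/
noncomputable def lr (H t : ℕ) : ℝ := (H + 1) / (H + t)

/-- Weight `α_t^i = α_i ∏_{j=i+1}^t (1 - α_j)`. -/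
noncomputable def lrW (H t i : ℕ) : ℝ :=
  lr H i * ∏ j ∈ Finset.Icc (i + 1) t, (1 - lr H j)

lemma lr_nonneg (H t : ℕ) : 0 ≤ lr H t := by
  unfold lr; positivity

lemma lr_le_one (H t : ℕ) (ht : 1 ≤ t) : lr H t ≤ 1 := by
  unfold lr
  rw [div_le_one (by positivity : (0:ℝ) < H + t)]
  have : (1:ℝ) ≤ t := by exact_mod_cast ht
  linarith

lemma lrW_nonneg (H t i : ℕ) (hi : 1 ≤ i) : 0 ≤ lrW H t i := by
  unfold lrW
  apply mul_nonneg (lr_nonneg H i)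
  apply Finset.prod_nonneg
  intro j hj
  have hj1 : 1 ≤ j := le_trans (Nat.le_add_left 1 i) (Finset.mem_Icc.mp hj).1
  linarith [lr_le_one H j hj1]

lemma lrW_succ_self (H t : ℕ) : lrW H (t+1) (t+1) = lr H (t+1) := by
  unfold lrW
  rw [Finset.Icc_eq_empty (by omega), Finset.prod_empty, mul_one]

lemma lrW_succ (H t i : ℕ) (hit : i ≤ t) :
    lrW H (t+1) i = (1 - lr H (t+1)) * lrW H t i := by
  unfold lrW
  rw [Finset.prod_Icc_succ_top (by omega : i + 1 ≤ t + 1)]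
  ring

lemma sum_lrW_succ (H t : ℕ) (f : ℕ → ℝ) (ht : 1 ≤ t) :
    ∑ i ∈ Finset.Icc 1 (t+1), lrW H (t+1) i * f i
      = lr H (t+1) * f (t+1)
        + (1 - lr H (t+1)) * ∑ i ∈ Finset.Icc 1 t, lrW H t i * f i := by
  rw [Finset.sum_Icc_succ_top (by omega : 1 ≤ t + 1), lrW_succ_self, Finset.mul_sum,
    Finset.sum_congr rfl (fun i hi => by
      rw [lrW_succ H t i (Finset.mem_Icc.mp hi).2, mul_assoc])]
  exact add_comm _ _

lemma sum_lrW_eq_one (H t : ℕ) (ht : 1 ≤ t) :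
    ∑ i ∈ Finset.Icc 1 t, lrW H t i = 1 := by
  induction t, ht using Nat.le_induction with
  | base =>
    simp only [Finset.Icc_self, Finset.sum_singleton]
    rw [lrW_succ_self H 0]
    unfold lr
    push_cast
    exact div_self (by positivity)
  | succ t ht ih =>
    have h := sum_lrW_succ H t (fun _ => 1) ht
    simp only [mul_one] at h
    rw [h, ih]
    ring

lemma key_ineq (h T A B : ℝ) (hh : 1 ≤ h) (hT : 1 ≤ T) (hA : 0 < A) (hB : 0 < B)
    (hTB : T * B ≤ (T+1) * A) :
    (h+1)/(h+(T+1)) * (1/B) + (1 - (h+1)/(h+(T+1))) * ((1+1/h)/A) ≤ (1+1/h)/B := by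
  have hh0 : (0:ℝ) < h := by linarith
  have hd : (0:ℝ) < h + (T+1) := by linarith
  have expand : (1+1/h)/B - ((h+1)/(h+(T+1)) * (1/B) + (1 - (h+1)/(h+(T+1))) * ((1+1/h)/A))
      = ((T+1)*A - T*B) * (h+1) / (h*(h+(T+1))*A*B) := by
    field_simp
    ring
  have hnum : (0:ℝ) ≤ ((T+1)*A - T*B) * (h+1) / (h*(h+(T+1))*A*B) := by
    apply div_nonneg _ (by positivity)
    apply mul_nonneg (by linarith) (by linarith)
  linarith

lemma upper (H : ℕ) (hH : 1 ≤ H) (a : ℝ) (ha0 : 0 ≤ a) (ha1 : a ≤ 1) :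
    ∀ t : ℕ, 1 ≤ t →
    ∑ i ∈ Finset.Icc 1 t, lrW H t i * (1 / (i : ℝ) ^ a) ≤ (1 + 1 / (H : ℝ)) / (t : ℝ) ^ a := by
  intro t ht
  induction t, ht using Nat.le_induction with
  | base =>
    simp only [Finset.Icc_self, Finset.sum_singleton]
    rw [lrW_succ_self H 0]
    unfold lr
    have hH0 : (0:ℝ) < H := by exact_mod_cast hH
    push_cast
    rw [Real.one_rpow, div_self (by positivity : (H:ℝ) + 1 ≠ 0)]
    have : (0:ℝ) ≤ 1 / (H:ℝ) := by positivity
    norm_num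
  | succ t ht ih =>
    rw [sum_lrW_succ H t _ ht]
    have hT : (1:ℝ) ≤ (t:ℝ) := by exact_mod_cast ht
    have hTpos : (0:ℝ) < t := by linarith
    have hA : (0:ℝ) < (t:ℝ) ^ a := Real.rpow_pos_of_pos hTpos a
    have hB : (0:ℝ) < ((t:ℝ)+1) ^ a := Real.rpow_pos_of_pos (by linarith) a
    have hh : (1:ℝ) ≤ (H:ℝ) := by exact_mod_cast hH
    have hTB : (t:ℝ) * ((t:ℝ)+1) ^ a ≤ ((t:ℝ)+1) * (t:ℝ) ^ a := by
      have hx : (0:ℝ) < (t:ℝ)/((t:ℝ)+1) := by positivity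
      have hx1 : (t:ℝ)/((t:ℝ)+1) ≤ 1 := by
        rw [div_le_one (by linarith)]; linarith
      have := Real.rpow_le_rpow_of_exponent_ge hx hx1 ha1
      rw [Real.rpow_one, Real.div_rpow hTpos.le (by linarith)] at this
      rw [div_le_div_iff₀ (by linarith) hB] at this
      linarith
    have hkey := key_ineq (H:ℝ) (t:ℝ) ((t:ℝ)^a) (((t:ℝ)+1)^a) hh hT hA hB hTB
    have hlr : lr H (t+1) = ((H:ℝ)+1)/((H:ℝ)+((t:ℝ)+1)) := by
      unfold lr; push_cast; ring_nf
    have hcast : ((t+1 : ℕ) : ℝ) = (t:ℝ) + 1 := by push_cast; ring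
    rw [hlr, hcast]
    have h1 : (1 - ((H:ℝ)+1)/((H:ℝ)+((t:ℝ)+1))) *
        (∑ i ∈ Finset.Icc 1 t, lrW H t i * (1 / (i:ℝ) ^ a)) ≤
        (1 - ((H:ℝ)+1)/((H:ℝ)+((t:ℝ)+1))) * ((1 + 1/(H:ℝ)) / (t:ℝ) ^ a) := by
      apply mul_le_mul_of_nonneg_left ih
      have : ((H:ℝ)+1)/((H:ℝ)+((t:ℝ)+1)) ≤ 1 := by
        rw [div_le_one (by linarith)]; linarith
      linarith
    calc ((H:ℝ)+1)/((H:ℝ)+((t:ℝ)+1)) * (1 / ((t:ℝ)+1) ^ a)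
          + (1 - ((H:ℝ)+1)/((H:ℝ)+((t:ℝ)+1))) *
            (∑ i ∈ Finset.Icc 1 t, lrW H t i * (1 / (i:ℝ) ^ a))
        ≤ ((H:ℝ)+1)/((H:ℝ)+((t:ℝ)+1)) * (1 / ((t:ℝ)+1) ^ a)
          + (1 - ((H:ℝ)+1)/((H:ℝ)+((t:ℝ)+1))) * ((1 + 1/(H:ℝ)) / (t:ℝ) ^ a) := by
          linarith
      _ ≤ (1 + 1/(H:ℝ)) / ((t:ℝ)+1) ^ a := hkey

theorem stmt1 (H : ℕ) (hH : 1 ≤ H) (t : ℕ) (ht : 1 ≤ t)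
    (a : ℝ) (ha : a ∈ Set.Icc (1/2 : ℝ) 1) :
    1 / (t : ℝ) ^ a ≤ ∑ i ∈ Finset.Icc 1 t, lrW H t i / (i : ℝ) ^ a ∧
    ∑ i ∈ Finset.Icc 1 t, lrW H t i / (i : ℝ) ^ a ≤ (1 + 1 / (H : ℝ)) / (t : ℝ) ^ a := by
  obtain ⟨ha0, ha1⟩ := ha
  have ha0' : (0:ℝ) ≤ a := by linarith
  have hTpos : (0:ℝ) < t := by exact_mod_cast ht
  have hA : (0:ℝ) < (t:ℝ) ^ a := Real.rpow_pos_of_pos hTpos a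
  constructor
  · have : ∑ i ∈ Finset.Icc 1 t, lrW H t i / (t:ℝ) ^ a
        ≤ ∑ i ∈ Finset.Icc 1 t, lrW H t i / (i:ℝ) ^ a := by
      apply Finset.sum_le_sum
      intro i hi
      obtain ⟨hi1, hit⟩ := Finset.mem_Icc.mp hi
      have hipos : (0:ℝ) < i := by exact_mod_cast hi1
      apply div_le_div_of_nonneg_left (lrW_nonneg H t i hi1) (Real.rpow_pos_of_pos hipos a)
      exact Real.rpow_le_rpow hipos.le (by exact_mod_cast hit) ha0'
    rw [← Finset.sum_div, sum_lrW_eq_one H t ht] at this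
    exact this
  · have := upper H hH a ha0' ha1 t ht
    calc ∑ i ∈ Finset.Icc 1 t, lrW H t i / (i:ℝ) ^ a
        = ∑ i ∈ Finset.Icc 1 t, lrW H t i * (1 / (i:ℝ) ^ a) := by
          apply Finset.sum_congr rfl; intro i _; ring
      _ ≤ _ := this
end

section
/- For the learning rate sequence α_t = (H+1)/(H+t) with H ≥ 1 and weights α_t^i := α_i ∏_{j=i+1}^t (1-α_j), for every fixed i ≥ 1, the infinite sum over t of α_t^i from t = i to infinity converges and equals 1 + 1/H. -/
/-!
Write `S_n = ∏_{j=i+1}^{i+n} (1 - α_j)` and `u_n = (H+i+n) S_n`. Since `(H+t)(1 - α_t) = t - 1`,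
`u_{n+1} = (i+n) S_n`, so `H S_n = u_n - u_{n+1}` and `α_{i+n}^i = (α_i / H)(u_n - u_{n+1})` telescopes
to `(α_i / H) u_0 = 1 + 1/H`, provided `u_n → 0`; this holds because `(i+n+1) u_n` is antitone.
-/

open Filter Topology Finset

theorem hasSum_sub_succ_of_antitone {u : ℕ → ℝ} {l : ℝ} (hu : Antitone u)
    (hl : Tendsto u atTop (𝓝 l)) : HasSum (fun n => u n - u (n + 1)) (u 0 - l) := by
  rw [hasSum_iff_tendsto_nat_of_nonneg fun n => sub_nonneg.2 (hu n.le_succ)]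
  simp_rw [sum_range_sub']
  exact tendsto_const_nhds.sub hl

theorem one_sub_lr (H : ℕ) {t : ℕ} (ht : 1 ≤ t) : 1 - lr H t = ((t : ℝ) - 1) / (H + t) := by
  have : (0 : ℝ) < H + t := by positivity
  rw [lr]
  field_simp
  ring

theorem prod_one_sub_lr_nonneg (H i n : ℕ) : 0 ≤ ∏ j ∈ Icc (i + 1) (i + n), (1 - lr H j) := by
  refine prod_nonneg fun j hj => ?_
  have hj : 1 ≤ j := by simp only [mem_Icc] at hj; omega
  rw [one_sub_lr H hj]
  have : (1 : ℝ) ≤ j := by exact_mod_cast hj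
  exact div_nonneg (by linarith) (by positivity)

noncomputable def lrPotential (H i n : ℕ) : ℝ :=
  ((H : ℝ) + i + n) * ∏ j ∈ Icc (i + 1) (i + n), (1 - lr H j)

theorem lrPotential_zero (H i : ℕ) : lrPotential H i 0 = H + i := by
  simp [lrPotential]

theorem lrPotential_succ (H i n : ℕ) :
    lrPotential H i (n + 1) = ((i : ℝ) + n) * ∏ j ∈ Icc (i + 1) (i + n), (1 - lr H j) := by
  rw [lrPotential, ← add_assoc, prod_Icc_succ_top (by omega), one_sub_lr H (by omega)]
  have : (0 : ℝ) < H + (i + n + 1 : ℕ) := by positivity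
  field_simp
  push_cast
  ring

theorem lrW_eq_mul_sub_lrPotential {H : ℕ} (hH : H ≠ 0) (i n : ℕ) :
    lrW H (i + n) i = lr H i / H * (lrPotential H i n - lrPotential H i (n + 1)) := by
  rw [lrPotential_succ, lrPotential, lrW]
  have : (H : ℝ) ≠ 0 := by exact_mod_cast hH
  field_simp
  ring

theorem antitone_lrPotential (H i : ℕ) : Antitone (lrPotential H i) := by
  refine antitone_nat_of_succ_le fun n => ?_
  rw [lrPotential_succ, lrPotential]
  nlinarith [mul_nonneg H.cast_nonneg (prod_one_sub_lr_nonneg H i n)]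

theorem antitone_mul_lrPotential {H : ℕ} (hH : 1 ≤ H) (i : ℕ) :
    Antitone fun n => ((i : ℝ) + n + 1) * lrPotential H i n := by
  refine antitone_nat_of_succ_le fun n => ?_
  rw [lrPotential_succ, lrPotential]
  have hS := prod_one_sub_lr_nonneg H i n
  have hH1 : (0 : ℝ) ≤ H - 1 := by rw [sub_nonneg]; exact_mod_cast hH
  have hin : (0 : ℝ) ≤ i + n := by positivity
  push_cast
  nlinarith [mul_nonneg hS (mul_nonneg hin hH1), mul_nonneg hS H.cast_nonneg]

theorem tendsto_lrPotential_zero {H : ℕ} (hH : 1 ≤ H) (i : ℕ) :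
    Tendsto (lrPotential H i) atTop (𝓝 0) := by
  have hbound (n : ℕ) : lrPotential H i n ≤ ((i : ℝ) + 1) * lrPotential H i 0 / (i + n + 1) := by
    rw [le_div_iff₀ (by positivity), mul_comm]
    simpa using antitone_mul_lrPotential hH i n.zero_le
  refine squeeze_zero (fun n => ?_) hbound ?_
  · exact mul_nonneg (by positivity) (prod_one_sub_lr_nonneg H i n)
  · exact tendsto_const_nhds.div_atTop
      (tendsto_atTop_add_const_right _ _ (tendsto_atTop_add_const_left _ _ tendsto_natCast_atTop_atTop))

theorem stmt4_general (H : ℕ) (hH : 1 ≤ H) (i : ℕ) :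
    HasSum (fun n : ℕ => lrW H (i + n) i) (1 + 1 / (H : ℝ)) := by
  have hH0 : H ≠ 0 := by omega
  have htele := (hasSum_sub_succ_of_antitone (antitone_lrPotential H i)
    (tendsto_lrPotential_zero hH i)).mul_left (lr H i / H)
  have hvalue : lr H i / H * (lrPotential H i 0 - 0) = 1 + 1 / (H : ℝ) := by
    have : (0 : ℝ) < H + i := by positivity
    rw [lrPotential_zero, sub_zero, lr]
    field_simp
  rw [← hvalue, funext (lrW_eq_mul_sub_lrPotential hH0 i)]
  exact htele

theorem stmt4 (H : ℕ) (hH : 1 ≤ H) (i : ℕ) (hi : 1 ≤ i) :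
    HasSum (fun n : ℕ => lrW H (i + n) i) (1 + 1 / (H : ℝ)) :=
  stmt4_general H hH i
end

section
/- Let H ≥ 1 and let b_t = c√(H^3 ι / t) + Lζ for constants c, ι, L, ζ ≥ 0. With weights α_t^i from the learning rate α_t = (H+1)/(H+t), the weighted bonus sum satisfies b_t ≤ ∑_{i=1}^t α_t^i b_i ≤ (1 + 1/H) b_t for every t ≥ 1. -/
/-- Bonus `b_t = c √(H³ι/t) + Lζ`. -/
noncomputable def bonus (H : ℕ) (c ι L ζ : ℝ) (t : ℕ) : ℝ :=
  c * Real.sqrt ((H : ℝ) ^ 3 * ι / t) + L * ζ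

lemma lr_one (H : ℕ) : lr H 1 = 1 := by
  have : (H:ℝ) + 1 ≠ 0 := by positivity
  simp [lr, div_self this]

lemma lrW_one (H : ℕ) : lrW H 1 1 = 1 := by
  simp [lrW, lr_one]

lemma sum_succ (H t : ℕ) (ht : 1 ≤ t) (f : ℕ → ℝ) :
    ∑ i ∈ Finset.Icc 1 (t+1), lrW H (t+1) i * f i
      = (1 - lr H (t+1)) * (∑ i ∈ Finset.Icc 1 t, lrW H t i * f i)
        + lr H (t+1) * f (t+1) := by
  rw [Finset.sum_Icc_succ_top (by omega), Finset.mul_sum]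
  congr 1
  · apply Finset.sum_congr rfl
    intro i hi
    have hit : i ≤ t := (Finset.mem_Icc.mp hi).2
    have : lrW H (t+1) i = (1 - lr H (t+1)) * lrW H t i := by
      unfold lrW
      rw [Finset.prod_Icc_succ_top (by omega)]
      ring
    rw [this]; ring
  · unfold lrW
    rw [Finset.Icc_eq_empty (by omega), Finset.prod_empty, mul_one]

lemma sum_eq_one (H : ℕ) : ∀ t, 1 ≤ t → ∑ i ∈ Finset.Icc 1 t, lrW H t i = 1 := by
  intro t ht
  induction t, ht using Nat.le_induction with
  | base => simp [lrW_one]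
  | succ n hn ih =>
    have := sum_succ H n hn (fun _ => 1)
    simp only [mul_one] at this
    rw [this, ih]; ring

lemma sqrt_bounds (H : ℕ) (hH : 1 ≤ H) : ∀ t : ℕ, 1 ≤ t →
    1 / Real.sqrt t ≤ ∑ i ∈ Finset.Icc 1 t, lrW H t i * (1 / Real.sqrt i) ∧
    ∑ i ∈ Finset.Icc 1 t, lrW H t i * (1 / Real.sqrt i) ≤ (1 + 1/(H:ℝ)) / Real.sqrt t := by
  intro t ht
  have hH1 : (1:ℝ) ≤ (H:ℝ) := by exact_mod_cast hH
  have hH0 : (0:ℝ) < (H:ℝ) := by linarith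
  induction t, ht using Nat.le_induction with
  | base =>
    constructor <;> simp [lrW_one] <;> nlinarith [one_div_pos.mpr hH0]
  | succ n hn ih =>
    have hn1 : (1:ℝ) ≤ (n:ℝ) := by exact_mod_cast hn
    have hu : Real.sqrt n > 0 := Real.sqrt_pos.mpr (by linarith)
    have hv : Real.sqrt ((n:ℝ)+1) > 0 := Real.sqrt_pos.mpr (by linarith)
    have huv : Real.sqrt n ≤ Real.sqrt ((n:ℝ)+1) := Real.sqrt_le_sqrt (by linarith)
    have hu2 : Real.sqrt n ^ 2 = (n:ℝ) := Real.sq_sqrt (by linarith)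
    have hv2 : Real.sqrt ((n:ℝ)+1) ^ 2 = (n:ℝ)+1 := Real.sq_sqrt (by linarith)
    have hlr : lr H (n+1) = ((H:ℝ)+1)/((H:ℝ)+(n:ℝ)+1) := by
      unfold lr; push_cast; ring_nf
    have hden : (0:ℝ) < (H:ℝ)+(n:ℝ)+1 := by linarith
    have ha0 : 0 ≤ lr H (n+1) := by rw [hlr]; positivity
    have ha1 : lr H (n+1) ≤ 1 := by rw [hlr, div_le_one hden]; linarith
    have hrec := sum_succ H n hn (fun i => 1 / Real.sqrt i)
    push_cast at hrec
    rw [hrec]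
    push_cast
    obtain ⟨ihl, ihr⟩ := ih
    constructor
    · have h1 : 1/Real.sqrt ((n:ℝ)+1) ≤ 1/Real.sqrt n := one_div_le_one_div_of_le hu huv
      have h2 : (1 - lr H (n+1)) * (1/Real.sqrt ((n:ℝ)+1)) ≤
          (1 - lr H (n+1)) * (∑ i ∈ Finset.Icc 1 n, lrW H n i * (1 / Real.sqrt i)) :=
        mul_le_mul_of_nonneg_left (le_trans h1 ihl) (by linarith)
      have h3 : (1 - lr H (n+1)) * (1/Real.sqrt ((n:ℝ)+1))
          + lr H (n+1) * (1/Real.sqrt ((n:ℝ)+1)) = 1/Real.sqrt ((n:ℝ)+1) := by ring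
      linarith
    · have hcore : (n:ℝ) * Real.sqrt ((n:ℝ)+1) ≤ ((n:ℝ)+1) * Real.sqrt n := by
        nlinarith [mul_nonneg (mul_nonneg hu.le hv.le) (sub_nonneg.2 huv)]
      have key : (1 - lr H (n+1)) * ((1 + 1/(H:ℝ)) / Real.sqrt n)
            + lr H (n+1) * (1/Real.sqrt ((n:ℝ)+1))
          ≤ (1 + 1/(H:ℝ)) / Real.sqrt ((n:ℝ)+1) := by
        have expand : (1 + 1/(H:ℝ)) / Real.sqrt ((n:ℝ)+1)
            - ((1 - lr H (n+1)) * ((1 + 1/(H:ℝ)) / Real.sqrt n)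
                + lr H (n+1) * (1/Real.sqrt ((n:ℝ)+1)))
            = (((H:ℝ)+1)/((H:ℝ)*((H:ℝ)+(n:ℝ)+1)))
              * ((((n:ℝ)+1)*Real.sqrt n - (n:ℝ)*Real.sqrt ((n:ℝ)+1))
                  /(Real.sqrt n * Real.sqrt ((n:ℝ)+1))) := by
          rw [hlr]; field_simp; ring
        have hfac : (0:ℝ) ≤ (((H:ℝ)+1)/((H:ℝ)*((H:ℝ)+(n:ℝ)+1)))
              * ((((n:ℝ)+1)*Real.sqrt n - (n:ℝ)*Real.sqrt ((n:ℝ)+1))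
                  /(Real.sqrt n * Real.sqrt ((n:ℝ)+1))) :=
          mul_nonneg (by positivity) (div_nonneg (by linarith) (by positivity))
        linarith
      have h2 : (1 - lr H (n+1)) * (∑ i ∈ Finset.Icc 1 n, lrW H n i * (1 / Real.sqrt i)) ≤
          (1 - lr H (n+1)) * ((1 + 1/(H:ℝ)) / Real.sqrt n) :=
        mul_le_mul_of_nonneg_left ihr (by linarith)
      linarith

theorem stmt13 (H : ℕ) (hH : 1 ≤ H) (c ι L ζ : ℝ)
    (hc : 0 ≤ c) (hι : 0 ≤ ι) (hL : 0 ≤ L) (hζ : 0 ≤ ζ)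
    (t : ℕ) (ht : 1 ≤ t) :
    bonus H c ι L ζ t ≤ ∑ i ∈ Finset.Icc 1 t, lrW H t i * bonus H c ι L ζ i ∧
    ∑ i ∈ Finset.Icc 1 t, lrW H t i * bonus H c ι L ζ i
      ≤ (1 + 1 / (H : ℝ)) * bonus H c ι L ζ t := by
  set A := c * Real.sqrt ((H:ℝ)^3 * ι) with hA
  have hA0 : 0 ≤ A := by positivity
  have hB0 : 0 ≤ L * ζ := mul_nonneg hL hζ
  have hbonus : ∀ i : ℕ, bonus H c ι L ζ i = A * (1/Real.sqrt i) + L * ζ := by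
    intro i
    unfold bonus
    rw [Real.sqrt_div (by positivity)]
    ring
  have hsum : ∑ i ∈ Finset.Icc 1 t, lrW H t i * bonus H c ι L ζ i
      = A * (∑ i ∈ Finset.Icc 1 t, lrW H t i * (1/Real.sqrt i)) + L * ζ := by
    calc ∑ i ∈ Finset.Icc 1 t, lrW H t i * bonus H c ι L ζ i
        = ∑ i ∈ Finset.Icc 1 t, (A * (lrW H t i * (1/Real.sqrt i)) + L * ζ * lrW H t i) := by
          apply Finset.sum_congr rfl; intro i _; rw [hbonus i]; ring
      _ = A * (∑ i ∈ Finset.Icc 1 t, lrW H t i * (1/Real.sqrt i))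
            + L * ζ * ∑ i ∈ Finset.Icc 1 t, lrW H t i := by
          rw [Finset.sum_add_distrib, ← Finset.mul_sum, ← Finset.mul_sum]
      _ = A * (∑ i ∈ Finset.Icc 1 t, lrW H t i * (1/Real.sqrt i)) + L * ζ := by
          rw [sum_eq_one H t ht, mul_one]
  obtain ⟨hl, hr⟩ := sqrt_bounds H hH t ht
  have hH1 : (1:ℝ) ≤ (H:ℝ) := by exact_mod_cast hH
  have hHinv : 0 ≤ 1/(H:ℝ) := by positivity
  rw [hsum, hbonus t]
  constructor
  · nlinarith [mul_le_mul_of_nonneg_left hl hA0]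
  · have h1 : A * (∑ i ∈ Finset.Icc 1 t, lrW H t i * (1/Real.sqrt i)) ≤ A * ((1 + 1/(H:ℝ))/Real.sqrt t) := mul_le_mul_of_nonneg_left hr hA0
    have h2 : L * ζ ≤ (1 + 1/(H:ℝ)) * (L * ζ) := by nlinarith
    have h3 : A * ((1 + 1/(H:ℝ))/Real.sqrt t) = (1 + 1/(H:ℝ)) * (A * (1/Real.sqrt t)) := by ring
    nlinarith
end
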